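/- Let (U_t)_{t≥0} be a family of ℝ^k-valued random vectors converging in distribution as t → ∞, and let (V_t)_{t≥0} be ℝ^ℓ-valued random vectors with V_t → V in probability for some random vector V. If g : ℝ^k × ℝ^ℓ → ℝ^d is continuous, then g(U_t, V_t) − g(U_t, V) → 0 in probability as t → ∞. -/

import Mathlib

open MeasureTheory Filter ProbabilityTheory

open scoped Topology ENNReal

/-!
Weak convergence of the laws of `U t` makes `(U t)` eventually tight, and the law of `V` is
tight, so off an event of small probability the pairs `(U t, V)` lie in a fixed compact set
`K × L`. A continuous `g` is uniformly continuous at `K × L`: `g x y'` is close to `g x y` as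
soon as `(x, y) ∈ K × L` and `y'` is close to `y`. Hence
`‖g (U t) (V t) - g (U t) V‖ ≥ ε` forces `U t ∉ K`, `V ∉ L` or `dist (V t) V ≥ η`, and each of
these events has small probability for large `t`.
-/

theorem IsCompact.exists_pos_forall_dist_lt {α β : Type*} [PseudoMetricSpace α]
    [PseudoMetricSpace β] {s : Set α} (hs : IsCompact s) {f : α → β}
    (hf : ∀ a ∈ s, ContinuousAt f a) {ε : ℝ} (hε : 0 < ε) :
    ∃ η > 0, ∀ a ∈ s, ∀ b, dist a b < η → dist (f a) (f b) < ε := by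
  obtain ⟨η, hη, h⟩ := Metric.mem_uniformity_dist.mp
    (hs.uniformContinuousAt_of_continuousAt f hf (Metric.dist_mem_uniformity hε))
  exact ⟨η, hη, fun a ha b hab => h hab ha⟩

section Tightness

variable {X ι Ω : Type*} [MeasurableSpace X] [TopologicalSpace X] [MeasurableSpace Ω]
  {l : Filter ι}

theorem MeasureTheory.ProbabilityMeasure.exists_isCompact_eventually_measure_compl_le_of_tendsto
    [OpensMeasurableSpace X] [HasOuterApproxClosed X] [WeaklyLocallyCompactSpace X]
    {μs : ι → ProbabilityMeasure X} {μ : ProbabilityMeasure X} (hμs : Tendsto μs l (𝓝 μ))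
    (hμ : IsTightMeasureSet {(μ : Measure X)}) {δ : ℝ≥0∞} (hδ : 0 < δ) :
    ∃ K, IsCompact K ∧ ∀ᶠ i in l, (μs i : Measure X) Kᶜ ≤ δ := by
  obtain ⟨δ', hδ'_pos, hδ'_lt⟩ := exists_between hδ
  obtain ⟨K, hK, hμK⟩ :=
    isTightMeasureSet_iff_exists_isCompact_measure_compl_le.mp hμ δ' hδ'_pos
  -- Portmanteau needs a closed set: enlarge `K` to a compact `K'` with `K ⊆ interior K'`.
  obtain ⟨K', hK', hKK'⟩ := exists_compact_superset hK
  have hF_small : (μ : Measure X) (interior K')ᶜ < δ :=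
    ((measure_mono (Set.compl_subset_compl.mpr hKK')).trans (hμK _ rfl)).trans_lt hδ'_lt
  have hlimsup : limsup (fun i => (μs i : Measure X) (interior K')ᶜ) l < δ :=
    (ProbabilityMeasure.limsup_measure_closed_le_of_tendsto hμs
      isOpen_interior.isClosed_compl).trans_lt hF_small
  refine ⟨K', hK', (eventually_lt_of_limsup_lt hlimsup).mono fun i hi => ?_⟩
  exact (measure_mono (Set.compl_subset_compl.mpr interior_subset)).trans hi.le

theorem exists_isCompact_measure_preimage_compl_le {P : Measure Ω} {f : Ω → X}
    (hf : AEMeasurable f P) (hf_tight : IsTightMeasureSet {P.map f}) {δ : ℝ≥0∞} (hδ : 0 < δ) :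
    ∃ K, IsCompact K ∧ P (f ⁻¹' Kᶜ) ≤ δ := by
  obtain ⟨K, hK, hfK⟩ :=
    isTightMeasureSet_iff_exists_isCompact_measure_compl_le.mp hf_tight δ hδ
  exact ⟨K, hK, (Measure.le_map_apply hf _).trans (hfK _ rfl)⟩

theorem exists_isCompact_eventually_measure_preimage_compl_le
    [OpensMeasurableSpace X] [HasOuterApproxClosed X] [WeaklyLocallyCompactSpace X]
    {P : Measure Ω} [IsProbabilityMeasure P] {U : ι → Ω → X} (hU : ∀ t, Measurable (U t))
    {μ : Measure X} [IsProbabilityMeasure μ] (hμ : IsTightMeasureSet {μ})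
    (hUμ : ∀ φ : BoundedContinuousFunction X ℝ,
      Tendsto (fun t => ∫ ω, φ (U t ω) ∂P) l (𝓝 (∫ x, φ x ∂μ)))
    {δ : ℝ≥0∞} (hδ : 0 < δ) :
    ∃ K, IsCompact K ∧ ∀ᶠ t in l, P (U t ⁻¹' Kᶜ) ≤ δ := by
  let law : ι → ProbabilityMeasure X := fun t =>
    ⟨P.map (U t), Measure.isProbabilityMeasure_map (hU t).aemeasurable⟩
  have hlaw : Tendsto law l (𝓝 ⟨μ, inferInstance⟩) := by
    refine ProbabilityMeasure.tendsto_iff_forall_integral_tendsto.mpr fun φ => ?_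
    simpa only [law, ProbabilityMeasure.coe_mk,
      integral_map (hU _).aemeasurable φ.continuous.aestronglyMeasurable] using hUμ φ
  obtain ⟨K, hK, hlawK⟩ :=
    ProbabilityMeasure.exists_isCompact_eventually_measure_compl_le_of_tendsto hlaw hμ hδ
  exact ⟨K, hK, hlawK.mono fun t ht => (Measure.le_map_apply (hU t).aemeasurable _).trans ht⟩

end Tightness

theorem tendstoInMeasure_apply_sub_apply_of_tight {Ω ι X Y E : Type*} [MeasurableSpace Ω]
    {P : Measure Ω} {l : Filter ι} [PseudoMetricSpace X] [PseudoMetricSpace Y]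
    [SeminormedAddCommGroup E] {U : ι → Ω → X} {V : ι → Ω → Y} {W : Ω → Y}
    (hU : ∀ δ > 0, ∃ K, IsCompact K ∧ ∀ᶠ t in l, P (U t ⁻¹' Kᶜ) ≤ δ)
    (hW : ∀ δ > 0, ∃ L, IsCompact L ∧ P (W ⁻¹' Lᶜ) ≤ δ)
    (hV : TendstoInMeasure P V l W) {g : X → Y → E}
    (hg : Continuous fun p : X × Y => g p.1 p.2) :
    TendstoInMeasure P (fun t ω => g (U t ω) (V t ω) - g (U t ω) (W ω)) l (fun _ => 0) := by
  refine tendstoInMeasure_iff_dist.mpr fun ε hε => ENNReal.tendsto_nhds_zero.mpr fun δ hδ => ?_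
  have hδ3 : 0 < δ / 3 := ENNReal.div_pos hδ.ne' ENNReal.ofNat_ne_top
  obtain ⟨K, hK, hUK⟩ := hU _ hδ3
  obtain ⟨L, hL, hWL⟩ := hW _ hδ3
  obtain ⟨η, hη, hg_unif⟩ :=
    (hK.prod hL).exists_pos_forall_dist_lt (fun _ _ => hg.continuousAt) hε
  have hVW := ENNReal.tendsto_nhds_zero.mp (tendstoInMeasure_iff_dist.mp hV η hη) _ hδ3
  filter_upwards [hUK, hVW] with t hUt hVt
  have hbad : {ω | ε ≤ dist (g (U t ω) (V t ω) - g (U t ω) (W ω)) 0} ⊆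
      U t ⁻¹' Kᶜ ∪ W ⁻¹' Lᶜ ∪ {ω | η ≤ dist (V t ω) (W ω)} := by
    intro ω hω
    by_contra hgood
    simp only [Set.mem_union, Set.mem_preimage, Set.mem_compl_iff, Set.mem_ofPred_eq, not_or,
      not_not, not_le] at hgood
    obtain ⟨⟨hUω, hWω⟩, hVω⟩ := hgood
    have hclose : dist (U t ω, W ω) (U t ω, V t ω) < η := by
      rw [Prod.dist_eq, dist_self, dist_comm]
      exact max_lt hη hVω
    have := hg_unif _ ⟨hUω, hWω⟩ _ hclose
    rw [Set.mem_ofPred_eq, dist_zero_right, ← dist_eq_norm, dist_comm] at hω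
    exact hω.not_gt this
  calc P {ω | ε ≤ dist (g (U t ω) (V t ω) - g (U t ω) (W ω)) 0}
      ≤ P (U t ⁻¹' Kᶜ) + P (W ⁻¹' Lᶜ) + P {ω | η ≤ dist (V t ω) (W ω)} :=
        (measure_mono hbad).trans
          ((measure_union_le _ _).trans (add_le_add_left (measure_union_le _ _) _))
    _ ≤ δ / 3 + δ / 3 + δ / 3 := by gcongr
    _ = δ := ENNReal.add_thirds δ

theorem katai_mogyorodi_general
    {Ω : Type*} [MeasurableSpace Ω] (P : Measure Ω) [IsProbabilityMeasure P]
    {k ℓ d : ℕ}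
    (U : ℝ → Ω → (Fin k → ℝ)) (hU : ∀ t, Measurable (U t))
    (V : ℝ → Ω → (Fin ℓ → ℝ))
    (Vlim : Ω → (Fin ℓ → ℝ)) (hVlim : Measurable Vlim)
    (μ : Measure (Fin k → ℝ)) [IsProbabilityMeasure μ]
    (hUconv : ∀ φ : BoundedContinuousFunction (Fin k → ℝ) ℝ,
      Tendsto (fun t => ∫ ω, φ (U t ω) ∂P) atTop (nhds (∫ x, φ x ∂μ)))
    (hVconv : TendstoInMeasure P V atTop Vlim)
    (g : (Fin k → ℝ) → (Fin ℓ → ℝ) → (Fin d → ℝ)) (hg : Continuous fun p :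
      (Fin k → ℝ) × (Fin ℓ → ℝ) => g p.1 p.2) :
    TendstoInMeasure P (fun t ω => g (U t ω) (V t ω) - g (U t ω) (Vlim ω))
      atTop (fun _ => 0) :=
  tendstoInMeasure_apply_sub_apply_of_tight
    (fun _ hδ => exists_isCompact_eventually_measure_preimage_compl_le hU
      isTightMeasureSet_singleton hUconv hδ)
    (fun _ hδ => exists_isCompact_measure_preimage_compl_le hVlim.aemeasurable
      isTightMeasureSet_singleton hδ)
    hVconv hg

/-- Multidimensional Kátai–Mogyoródi lemma: if `(U_t)` converges in distribution as
`t → ∞`, `(V_t)` converges in probability to `V`, and `g` is continuous, then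
`g(U_t, V_t) − g(U_t, V) → 0` in probability. -/
theorem katai_mogyorodi
    {Ω : Type*} [MeasurableSpace Ω] (P : Measure Ω) [IsProbabilityMeasure P]
    {k ℓ d : ℕ}
    (U : ℝ → Ω → (Fin k → ℝ)) (hU : ∀ t, Measurable (U t))
    (V : ℝ → Ω → (Fin ℓ → ℝ)) (hV : ∀ t, Measurable (V t))
    (Vlim : Ω → (Fin ℓ → ℝ)) (hVlim : Measurable Vlim)
    (μ : Measure (Fin k → ℝ)) [IsProbabilityMeasure μ]
    (hUconv : ∀ φ : BoundedContinuousFunction (Fin k → ℝ) ℝ,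
      Tendsto (fun t => ∫ ω, φ (U t ω) ∂P) atTop (nhds (∫ x, φ x ∂μ)))
    (hVconv : TendstoInMeasure P V atTop Vlim)
    (g : (Fin k → ℝ) → (Fin ℓ → ℝ) → (Fin d → ℝ)) (hg : Continuous fun p :
      (Fin k → ℝ) × (Fin ℓ → ℝ) => g p.1 p.2) :
    TendstoInMeasure P (fun t ω => g (U t ω) (V t ω) - g (U t ω) (Vlim ω))
      atTop (fun _ => 0) :=
  katai_mogyorodi_general P U hU V Vlim hVlim μ hUconv hVconv g hg
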